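/- For the root system F4, with fundamental weights π1=(1,0,0,0), π2=(3/2,1/2,1/2,1/2), π3=(2,1,1,0), π4=(1,1,0,0): for every dominant weight λ = a1π1 + a2π2 + a3π3 + a4π4 with a1,a2,a3,a4 nonnegative integers and λ ∉ {0, π1}, the set M_F4(λ) contains a subset which is not saturated; in particular M_F4(λ) is not hereditarily normal. -/

import Mathlib

namespace TorusNormal

/-- `V n` is the rational vector space `ℚ^n`. -/
abbrev V (n : ℕ) := Fin n → ℚ

/-- The standard scalar product on `ℚ^n`. -/
def dot {n : ℕ} (x y : V n) : ℚ := ∑ i, x i * y i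

lemma dot_add_right {n : ℕ} (α x y : V n) : dot α (x + y) = dot α x + dot α y := by
  simp [dot, mul_add, Finset.sum_add_distrib]

lemma dot_smul_right {n : ℕ} (α : V n) (c : ℚ) (x : V n) : dot α (c • x) = c * dot α x := by
  simp [dot, Finset.mul_sum, mul_left_comm]

/-- The reflection `s_α : x ↦ x - (2(α,x)/(α,α))·α`, as a linear map. -/
def reflLin {n : ℕ} (α : V n) : V n →ₗ[ℚ] V n where
  toFun x := x - ((2 * dot α x) / dot α α) • α
  map_add' x y := by
    try dsimp only
    rw [dot_add_right,
      show (2 * (dot α x + dot α y)) / dot α α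
        = (2 * dot α x) / dot α α + (2 * dot α y) / dot α α by ring, add_smul]
    abel
  map_smul' c x := by
    try dsimp only
    rw [dot_smul_right]
    simp only [RingHom.id_apply]
    rw [smul_sub, smul_smul]
    congr 1
    congr 1
    ring

/-- The Weyl group of a root system `Φ`: the subgroup of `GL(ℚ^n)` generated by the
reflections `s_α`, `α ∈ Φ`. -/
def weylGroup {n : ℕ} (Φ : Set (V n)) : Subgroup (Module.End ℚ (V n))ˣ :=
  Subgroup.closure {g | ∃ α ∈ Φ, g.val = reflLin α}

/-- The orbit of `l` under the Weyl group of `Φ`. -/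
def weylOrbit {n : ℕ} (Φ : Set (V n)) (l : V n) : Set (V n) :=
  {x | ∃ g ∈ weylGroup Φ, x = g.val l}

/-- The weight polytope `P(λ)`: the convex hull of the Weyl orbit of `λ`. -/
def weightPolytope {n : ℕ} (Φ : Set (V n)) (l : V n) : Set (V n) :=
  convexHull ℚ (weylOrbit Φ l)

/-- `M(λ) = (λ + Ξ) ∩ P(λ)`, where `Ξ` is the root lattice (the ℤ-span of `Φ`). -/
def Mset {n : ℕ} (Φ : Set (V n)) (l : V n) : Set (V n) :=
  {x | x - l ∈ Submodule.span ℤ Φ ∧ x ∈ weightPolytope Φ l}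

/-- `v` is a ℚ≥0-linear combination of elements of `S`. -/
def InCone {n : ℕ} (S : Set (V n)) (v : V n) : Prop :=
  ∃ (t : Finset (V n)) (c : V n → ℚ),
    ↑t ⊆ S ∧ (∀ x ∈ t, 0 ≤ c x) ∧ v = ∑ x ∈ t, c x • x

/-- A set `S ⊆ ℚ^n` is saturated if every vector in the intersection of the ℤ-linear span
of `S` with the ℚ≥0-cone of `S` is a ℤ≥0-linear combination of elements of `S`
(equivalently, lies in the additive submonoid generated by `S`). -/
def IsSaturated {n : ℕ} (S : Set (V n)) : Prop :=
  ∀ v : V n, v ∈ Submodule.span ℤ S → InCone S v → v ∈ AddSubmonoid.closure S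

/-- A set is hereditarily normal if every subset is saturated. -/
def HereditarilyNormal {n : ℕ} (S : Set (V n)) : Prop :=
  ∀ T : Set (V n), T ⊆ S → IsSaturated T


/-- The root system `F₄` in `ℚ^4`: the vectors `±εᵢ`, `±εᵢ±εⱼ` (`i ≠ j`) and
`(1/2)(±ε₁±ε₂±ε₃±ε₄)`. -/
def f4roots : Set (V 4) :=
  {x | (∃ i : Fin 4, x = Pi.single i (1 : ℚ) ∨ x = -Pi.single i (1 : ℚ)) ∨
       (∃ i j : Fin 4, i ≠ j ∧ ∃ a b : ℚ, (a = 1 ∨ a = -1) ∧ (b = 1 ∨ b = -1) ∧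
          x = a • (Pi.single i 1 : V 4) + b • (Pi.single j 1 : V 4)) ∨
       (∃ s : Fin 4 → ℚ, (∀ i, s i = 1 ∨ s i = -1) ∧ x = (2⁻¹ : ℚ) • s)}

def piF4_1 : V 4 := ![1, 0, 0, 0]
def piF4_2 : V 4 := ![3/2, 1/2, 1/2, 1/2]
def piF4_3 : V 4 := ![2, 1, 1, 0]
def piF4_4 : V 4 := ![1, 1, 0, 0]


section Aux

lemma dot_sub_right {n : ℕ} (α x y : V n) : dot α (x - y) = dot α x - dot α y := by
  simp [dot, mul_sub, Finset.sum_sub_distrib]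

lemma reflLin_apply {n : ℕ} (α x : V n) :
    reflLin α x = x - ((2 * dot α x) / dot α α) • α := rfl

lemma dot_reflLin {n : ℕ} (α : V n) (h : dot α α ≠ 0) (x : V n) :
    dot α (reflLin α x) = - dot α x := by
  rw [reflLin_apply, dot_sub_right, dot_smul_right]
  field_simp
  ring

lemma reflLin_invol {n : ℕ} (α : V n) (h : dot α α ≠ 0) :
    (reflLin α : Module.End ℚ (V n)) * reflLin α = 1 := by
  apply LinearMap.ext; intro x
  rw [Module.End.mul_apply]
  conv_lhs => rw [reflLin_apply α (reflLin α x), dot_reflLin α h]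
  rw [reflLin_apply, show (2 * - dot α x) / dot α α = -((2 * dot α x) / dot α α) by ring,
    neg_smul, sub_neg_eq_add, sub_add_cancel]
  rfl

def reflUnit {n : ℕ} (α : V n) (h : dot α α ≠ 0) : (Module.End ℚ (V n))ˣ :=
  ⟨reflLin α, reflLin α, reflLin_invol α h, reflLin_invol α h⟩

def E0 : V 4 := ![1,0,0,0]
def E1 : V 4 := ![0,1,0,0]
def E2 : V 4 := ![0,0,1,0]
def E3 : V 4 := ![0,0,0,1]
def S01 : V 4 := ![1,-1,0,0]
def S02 : V 4 := ![1,0,-1,0]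
def S12 : V 4 := ![0,1,-1,0]

lemma E0_root : E0 ∈ f4roots := by
  left; exact ⟨0, Or.inl (by funext i; fin_cases i <;> simp [E0, Pi.single_apply])⟩
lemma E1_root : E1 ∈ f4roots := by
  left; exact ⟨1, Or.inl (by funext i; fin_cases i <;> simp [E1, Pi.single_apply])⟩
lemma E2_root : E2 ∈ f4roots := by
  left; exact ⟨2, Or.inl (by funext i; fin_cases i <;> simp [E2, Pi.single_apply])⟩
lemma E3_root : E3 ∈ f4roots := by
  left; exact ⟨3, Or.inl (by funext i; fin_cases i <;> simp [E3, Pi.single_apply])⟩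
lemma S01_root : S01 ∈ f4roots := by
  right; left
  refine ⟨0, 1, by decide, 1, -1, Or.inl rfl, Or.inr rfl, ?_⟩
  funext i; fin_cases i <;> simp [S01, Pi.single_apply]
lemma S02_root : S02 ∈ f4roots := by
  right; left
  refine ⟨0, 2, by decide, 1, -1, Or.inl rfl, Or.inr rfl, ?_⟩
  funext i; fin_cases i <;> simp [S02, Pi.single_apply]
lemma S12_root : S12 ∈ f4roots := by
  right; left
  refine ⟨1, 2, by decide, 1, -1, Or.inl rfl, Or.inr rfl, ?_⟩
  funext i; fin_cases i <;> simp [S12, Pi.single_apply]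

lemma dot_E0 : dot E0 E0 ≠ 0 := by simp [dot, Fin.sum_univ_four, E0]
lemma dot_E1 : dot E1 E1 ≠ 0 := by simp [dot, Fin.sum_univ_four, E1]
lemma dot_E2 : dot E2 E2 ≠ 0 := by simp [dot, Fin.sum_univ_four, E2]
lemma dot_E3 : dot E3 E3 ≠ 0 := by simp [dot, Fin.sum_univ_four, E3]
lemma dot_S01 : dot S01 S01 ≠ 0 := by norm_num [dot, Fin.sum_univ_four, S01, Matrix.cons_val_two, Matrix.cons_val_three]
lemma dot_S02 : dot S02 S02 ≠ 0 := by norm_num [dot, Fin.sum_univ_four, S02, Matrix.cons_val_two, Matrix.cons_val_three]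
lemma dot_S12 : dot S12 S12 ≠ 0 := by norm_num [dot, Fin.sum_univ_four, S12, Matrix.cons_val_two, Matrix.cons_val_three]

lemma rf0 (a b c d : ℚ) : reflLin E0 ![a,b,c,d] = ![-a, b, c, d] := by
  rw [reflLin_apply]
  funext i
  fin_cases i <;> norm_num [dot, Fin.sum_univ_four, E0, Matrix.cons_val_two, Matrix.cons_val_three] <;> ring
lemma rf1 (a b c d : ℚ) : reflLin E1 ![a,b,c,d] = ![a, -b, c, d] := by
  rw [reflLin_apply]
  funext i
  fin_cases i <;> norm_num [dot, Fin.sum_univ_four, E1, Matrix.cons_val_two, Matrix.cons_val_three] <;> ring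
lemma rf2 (a b c d : ℚ) : reflLin E2 ![a,b,c,d] = ![a, b, -c, d] := by
  rw [reflLin_apply]
  funext i
  fin_cases i <;> norm_num [dot, Fin.sum_univ_four, E2, Matrix.cons_val_two, Matrix.cons_val_three] <;> ring
lemma rf3 (a b c d : ℚ) : reflLin E3 ![a,b,c,d] = ![a, b, c, -d] := by
  rw [reflLin_apply]
  funext i
  fin_cases i <;> norm_num [dot, Fin.sum_univ_four, E3, Matrix.cons_val_two, Matrix.cons_val_three] <;> ring
lemma rt01 (a b c d : ℚ) : reflLin S01 ![a,b,c,d] = ![b, a, c, d] := by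
  rw [reflLin_apply]
  funext i
  fin_cases i <;> norm_num [dot, Fin.sum_univ_four, S01, Matrix.cons_val_two, Matrix.cons_val_three] <;> ring
lemma rt02 (a b c d : ℚ) : reflLin S02 ![a,b,c,d] = ![c, b, a, d] := by
  rw [reflLin_apply]
  funext i
  fin_cases i <;> norm_num [dot, Fin.sum_univ_four, S02, Matrix.cons_val_two, Matrix.cons_val_three] <;> ring
lemma rt12 (a b c d : ℚ) : reflLin S12 ![a,b,c,d] = ![a, c, b, d] := by
  rw [reflLin_apply]
  funext i
  fin_cases i <;> norm_num [dot, Fin.sum_univ_four, S12, Matrix.cons_val_two, Matrix.cons_val_three] <;> ring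

lemma reflUnit_mem {n : ℕ} {Φ : Set (V n)} {α : V n} (hα : α ∈ Φ) (h : dot α α ≠ 0) :
    reflUnit α h ∈ weylGroup Φ :=
  Subgroup.subset_closure ⟨α, hα, rfl⟩

lemma orbit_self {n : ℕ} (Φ : Set (V n)) (l : V n) : l ∈ weylOrbit Φ l :=
  ⟨1, one_mem _, by simp⟩

lemma orbit_step {n : ℕ} {Φ : Set (V n)} {l y : V n} (hy : y ∈ weylOrbit Φ l)
    {α : V n} (hα : α ∈ Φ) (h : dot α α ≠ 0) : reflLin α y ∈ weylOrbit Φ l := by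
  obtain ⟨g, hg, rfl⟩ := hy
  refine ⟨reflUnit α h * g, mul_mem (reflUnit_mem hα h) hg, ?_⟩
  rw [Units.val_mul, Module.End.mul_apply]
  rfl

section OrbitPts
variable (p q r s : ℚ)

lemma hO2 : (![p,q,-r,-s] : V 4) ∈ weylOrbit f4roots ![p,q,r,s] := by
  have h := orbit_step (orbit_step (orbit_self f4roots ![p,q,r,s]) E3_root dot_E3)
    E2_root dot_E2
  rwa [rf3, rf2] at h
lemma hO3 : (![q,p,r,s] : V 4) ∈ weylOrbit f4roots ![p,q,r,s] := by
  have h := orbit_step (orbit_self f4roots ![p,q,r,s]) S01_root dot_S01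
  rw [rt01] at h
  convert h using 2 <;> ring

lemma hO4 : (![q,p,- r,- s] : V 4) ∈ weylOrbit f4roots ![p,q,r,s] := by
  have h := orbit_step (orbit_step (orbit_step (orbit_self f4roots ![p,q,r,s]) E3_root dot_E3) E2_root dot_E2) S01_root dot_S01
  rw [rf3, rf2, rt01] at h
  convert h using 2 <;> ring

lemma hO5 : (![- p,- q,r,s] : V 4) ∈ weylOrbit f4roots ![p,q,r,s] := by
  have h := orbit_step (orbit_step (orbit_self f4roots ![p,q,r,s]) E1_root dot_E1) E0_root dot_E0
  rw [rf1, rf0] at h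
  convert h using 2 <;> ring

lemma hO6 : (![- p,- q,- r,- s] : V 4) ∈ weylOrbit f4roots ![p,q,r,s] := by
  have h := orbit_step (orbit_step (orbit_step (orbit_step (orbit_self f4roots ![p,q,r,s]) E3_root dot_E3) E2_root dot_E2) E1_root dot_E1) E0_root dot_E0
  rw [rf3, rf2, rf1, rf0] at h
  convert h using 2 <;> ring

lemma hO7 : (![p,- q,r,s] : V 4) ∈ weylOrbit f4roots ![p,q,r,s] := by
  have h := orbit_step (orbit_self f4roots ![p,q,r,s]) E1_root dot_E1
  rw [rf1] at h
  convert h using 2 <;> ring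

lemma hO8 : (![p,- q,- r,- s] : V 4) ∈ weylOrbit f4roots ![p,q,r,s] := by
  have h := orbit_step (orbit_step (orbit_step (orbit_self f4roots ![p,q,r,s]) E3_root dot_E3) E2_root dot_E2) E1_root dot_E1
  rw [rf3, rf2, rf1] at h
  convert h using 2 <;> ring

lemma hO9 : (![r,p,q,s] : V 4) ∈ weylOrbit f4roots ![p,q,r,s] := by
  have h := orbit_step (orbit_step (orbit_self f4roots ![p,q,r,s]) S02_root dot_S02) S12_root dot_S12
  rw [rt02, rt12] at h
  convert h using 2 <;> ring

lemma hO10 : (![- r,p,q,- s] : V 4) ∈ weylOrbit f4roots ![p,q,r,s] := by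
  have h := orbit_step (orbit_step (orbit_step (orbit_step (orbit_self f4roots ![p,q,r,s]) S02_root dot_S02) S12_root dot_S12) E3_root dot_E3) E0_root dot_E0
  rw [rt02, rt12, rf3, rf0] at h
  convert h using 2 <;> ring

lemma hO11 : (![r,q,p,s] : V 4) ∈ weylOrbit f4roots ![p,q,r,s] := by
  have h := orbit_step (orbit_self f4roots ![p,q,r,s]) S02_root dot_S02
  rw [rt02] at h
  convert h using 2 <;> ring

lemma hO12 : (![- r,q,p,- s] : V 4) ∈ weylOrbit f4roots ![p,q,r,s] := by
  have h := orbit_step (orbit_step (orbit_step (orbit_self f4roots ![p,q,r,s]) S02_root dot_S02) E3_root dot_E3) E0_root dot_E0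
  rw [rt02, rf3, rf0] at h
  convert h using 2 <;> ring

lemma hO13 : (![r,- p,q,s] : V 4) ∈ weylOrbit f4roots ![p,q,r,s] := by
  have h := orbit_step (orbit_step (orbit_step (orbit_self f4roots ![p,q,r,s]) S02_root dot_S02) S12_root dot_S12) E1_root dot_E1
  rw [rt02, rt12, rf1] at h
  convert h using 2 <;> ring

lemma hO14 : (![- r,- p,q,- s] : V 4) ∈ weylOrbit f4roots ![p,q,r,s] := by
  have h := orbit_step (orbit_step (orbit_step (orbit_step (orbit_step (orbit_self f4roots ![p,q,r,s]) S02_root dot_S02) S12_root dot_S12) E3_root dot_E3) E1_root dot_E1) E0_root dot_E0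
  rw [rt02, rt12, rf3, rf1, rf0] at h
  convert h using 2 <;> ring

lemma hO15 : (![r,- q,p,s] : V 4) ∈ weylOrbit f4roots ![p,q,r,s] := by
  have h := orbit_step (orbit_step (orbit_self f4roots ![p,q,r,s]) S02_root dot_S02) E1_root dot_E1
  rw [rt02, rf1] at h
  convert h using 2 <;> ring

lemma hO16 : (![- r,- q,p,- s] : V 4) ∈ weylOrbit f4roots ![p,q,r,s] := by
  have h := orbit_step (orbit_step (orbit_step (orbit_step (orbit_self f4roots ![p,q,r,s]) S02_root dot_S02) E3_root dot_E3) E1_root dot_E1) E0_root dot_E0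
  rw [rt02, rf3, rf1, rf0] at h
  convert h using 2 <;> ring

lemma comboH {S : Set (V 4)} {x y z : V 4} (hx : x ∈ convexHull ℚ S)
    (hy : y ∈ convexHull ℚ S) {θ : ℚ} (h0 : 0 ≤ θ) (h1 : θ ≤ 1)
    (hz : z = θ • x + (1 - θ) • y) : z ∈ convexHull ℚ S :=
  hz ▸ (convex_convexHull ℚ S) hx hy h0 (by linarith) (by ring)

lemma hulls (hp : 1 ≤ p) (hpq : 2 ≤ p + q) (hO1 : (![p,q,r,s] : V 4) ∈ weylOrbit f4roots ![p,q,r,s]) :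
    (![1,0,0,0] : V 4) ∈ convexHull ℚ (weylOrbit f4roots ![p,q,r,s]) ∧
    (![1,1,0,0] : V 4) ∈ convexHull ℚ (weylOrbit f4roots ![p,q,r,s]) ∧
    (![0,1,1,0] : V 4) ∈ convexHull ℚ (weylOrbit f4roots ![p,q,r,s]) ∧
    (![0,-1,1,0] : V 4) ∈ convexHull ℚ (weylOrbit f4roots ![p,q,r,s]) := by
  have hpq0 : (0:ℚ) < p + q := by linarith
  have sub := subset_convexHull ℚ (weylOrbit f4roots ![p,q,r,s])
  have h1 := sub hO1
  have h2 := sub (hO2 p q r s)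
  have h3 := sub (hO3 p q r s)
  have h4 := sub (hO4 p q r s)
  have h5 := sub (hO5 p q r s)
  have h6 := sub (hO6 p q r s)
  have h7 := sub (hO7 p q r s)
  have h8 := sub (hO8 p q r s)
  have h9 := sub (hO9 p q r s)
  have h10 := sub (hO10 p q r s)
  have h11 := sub (hO11 p q r s)
  have h12 := sub (hO12 p q r s)
  have h13 := sub (hO13 p q r s)
  have h14 := sub (hO14 p q r s)
  have h15 := sub (hO15 p q r s)
  have h16 := sub (hO16 p q r s)
  have hm1 : (![p,q,0,0] : V 4) ∈ _ := comboH h1 h2 (θ := 1/2) (by norm_num) (by norm_num)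
    (by funext i; fin_cases i <;> simp <;> ring)
  have hm2 : (![q,p,0,0] : V 4) ∈ _ := comboH h3 h4 (θ := 1/2) (by norm_num) (by norm_num)
    (by funext i; fin_cases i <;> simp <;> ring)
  have hm3 : (![-p,-q,0,0] : V 4) ∈ _ := comboH h5 h6 (θ := 1/2) (by norm_num) (by norm_num)
    (by funext i; fin_cases i <;> simp <;> ring)
  have hm4 : (![p,-q,0,0] : V 4) ∈ _ := comboH h7 h8 (θ := 1/2) (by norm_num) (by norm_num)
    (by funext i; fin_cases i <;> simp <;> ring)
  have hm5 : (![0,p,q,0] : V 4) ∈ _ := comboH h9 h10 (θ := 1/2) (by norm_num) (by norm_num)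
    (by funext i; fin_cases i <;> simp <;> ring)
  have hm6 : (![0,q,p,0] : V 4) ∈ _ := comboH h11 h12 (θ := 1/2) (by norm_num) (by norm_num)
    (by funext i; fin_cases i <;> simp <;> ring)
  have hm7 : (![0,-p,q,0] : V 4) ∈ _ := comboH h13 h14 (θ := 1/2) (by norm_num) (by norm_num)
    (by funext i; fin_cases i <;> simp <;> ring)
  have hm8 : (![0,-q,p,0] : V 4) ∈ _ := comboH h15 h16 (θ := 1/2) (by norm_num) (by norm_num)
    (by funext i; fin_cases i <;> simp <;> ring)
  have hz : (0 : V 4) ∈ _ := comboH hm1 hm3 (θ := 1/2) (by norm_num) (by norm_num)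
    (by funext i; fin_cases i <;> simp <;> ring)
  have hc : (![(p+q)/2,(p+q)/2,0,0] : V 4) ∈ _ := comboH hm1 hm2 (θ := 1/2)
    (by norm_num) (by norm_num) (by funext i; fin_cases i <;> simp <;> ring)
  have hc' : (![0,(p+q)/2,(p+q)/2,0] : V 4) ∈ _ := comboH hm5 hm6 (θ := 1/2)
    (by norm_num) (by norm_num) (by funext i; fin_cases i <;> simp <;> ring)
  have hc'' : (![0,-(p+q)/2,(p+q)/2,0] : V 4) ∈ _ := comboH hm7 hm8 (θ := 1/2)
    (by norm_num) (by norm_num) (by funext i; fin_cases i <;> simp <;> ring)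
  have hn1 : (![p,0,0,0] : V 4) ∈ _ := comboH hm1 hm4 (θ := 1/2) (by norm_num)
    (by norm_num) (by funext i; fin_cases i <;> simp <;> ring)
  have hθ0 : 0 ≤ 2/(p+q) := by positivity
  have hθ1 : 2/(p+q) ≤ 1 := by rw [div_le_one hpq0]; linarith
  have hp0 : (0:ℚ) < p := by linarith [hp]
  refine ⟨?_, ?_, ?_, ?_⟩
  · exact comboH hn1 hz (θ := 1/p) (by positivity) (by rw [div_le_one hp0]; linarith)
      (by funext i; fin_cases i <;> simp <;> field_simp)
  · exact comboH hc hz hθ0 hθ1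
      (by funext i; fin_cases i <;> simp <;> field_simp)
  · exact comboH hc' hz hθ0 hθ1
      (by funext i; fin_cases i <;> simp <;> field_simp)
  · exact comboH hc'' hz hθ0 hθ1
      (by funext i; fin_cases i <;> simp <;> field_simp <;> ring)

end OrbitPts

-- ### saturation counterexample data

/-- The non-saturated subset: `{e₁, e₁+e₂, e₂+e₃, e₃-e₂}`. -/
def Tset : Set (V 4) := {![1,0,0,0], ![1,1,0,0], ![0,1,1,0], ![0,-1,1,0]}

lemma t2_root : (![1,1,0,0] : V 4) ∈ f4roots := by
  right; left
  refine ⟨0, 1, by decide, 1, 1, Or.inl rfl, Or.inl rfl, ?_⟩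
  funext i; fin_cases i <;> simp [Pi.single_apply]

lemma t3_root : (![0,1,1,0] : V 4) ∈ f4roots := by
  right; left
  refine ⟨1, 2, by decide, 1, 1, Or.inl rfl, Or.inl rfl, ?_⟩
  funext i; fin_cases i <;> simp [Pi.single_apply]

lemma t4_root : (![0,-1,1,0] : V 4) ∈ f4roots := by
  right; left
  refine ⟨1, 2, by decide, -1, 1, Or.inr rfl, Or.inl rfl, ?_⟩
  funext i; fin_cases i <;> simp [Pi.single_apply]

lemma t13_root : (![1,0,1,0] : V 4) ∈ f4roots := by
  right; left
  refine ⟨0, 2, by decide, 1, 1, Or.inl rfl, Or.inl rfl, ?_⟩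
  funext i; fin_cases i <;> simp [Pi.single_apply]

lemma half_root : (![1/2,1/2,1/2,1/2] : V 4) ∈ f4roots := by
  right; right
  refine ⟨![1,1,1,1], by intro i; fin_cases i <;> norm_num, ?_⟩
  funext i; fin_cases i <;> norm_num

lemma natsmul_mem_span {S : Set (V 4)} {v : V 4} (hv : v ∈ Submodule.span ℤ S) (a : ℕ) :
    (a : ℚ) • v ∈ Submodule.span ℤ S := by
  induction a with
  | zero => simp
  | succ n ih =>
      have : ((n+1 : ℕ) : ℚ) • v = (n : ℚ) • v + v := by push_cast; rw [add_smul, one_smul]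
      rw [this]
      exact add_mem ih hv

lemma l_mem_span (a1 a2 a3 a4 : ℕ) (l : V 4)
    (hl : l = (a1 : ℚ) • piF4_1 + (a2 : ℚ) • piF4_2 + (a3 : ℚ) • piF4_3 +
      (a4 : ℚ) • piF4_4) : l ∈ Submodule.span ℤ f4roots := by
  have h1 : piF4_1 ∈ Submodule.span ℤ f4roots := Submodule.subset_span E0_root
  have h4 : piF4_4 ∈ Submodule.span ℤ f4roots := Submodule.subset_span t2_root
  have h2 : piF4_2 ∈ Submodule.span ℤ f4roots := by
    have : piF4_2 = ![1/2,1/2,1/2,1/2] + ![1,0,0,0] := by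
      funext i; fin_cases i <;> norm_num [piF4_2]
    rw [this]
    exact add_mem (Submodule.subset_span half_root) (Submodule.subset_span E0_root)
  have h3 : piF4_3 ∈ Submodule.span ℤ f4roots := by
    have : piF4_3 = ![1,1,0,0] + ![1,0,1,0] := by
      funext i; fin_cases i <;> norm_num [piF4_3]
    rw [this]
    exact add_mem (Submodule.subset_span t2_root) (Submodule.subset_span t13_root)
  rw [hl]
  exact add_mem (add_mem (add_mem (natsmul_mem_span h1 a1) (natsmul_mem_span h2 a2))
    (natsmul_mem_span h3 a3)) (natsmul_mem_span h4 a4)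

lemma key_exclusion {T : Set (V 4)} {h : V 4} (hT : ∀ t ∈ T, dot h t = 1) {x : V 4}
    (hx : dot h x = 1) (hxT : x ∉ T) : x ∉ AddSubmonoid.closure T := by
  intro hmem
  let S : AddSubmonoid (V 4) :=
    { carrier := {v | ∃ m : ℕ, dot h v = m ∧ (m = 0 → v = 0) ∧ (m = 1 → v ∈ T)}
      zero_mem' := ⟨0, by simp [dot], fun _ => rfl, by norm_num⟩
      add_mem' := by
        rintro v w ⟨mv, hmv, hv0, hv1⟩ ⟨mw, hmw, hw0, hw1⟩
        refine ⟨mv + mw, by rw [dot_add_right, hmv, hmw]; push_cast; ring, ?_, ?_⟩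
        · intro hz
          have h1 : mv = 0 := by omega
          have h2 : mw = 0 := by omega
          rw [hv0 h1, hw0 h2, add_zero]
        · intro hone
          rcases Nat.eq_zero_or_pos mv with hmv0 | hmvpos
          · have : mw = 1 := by omega
            rw [hv0 hmv0, zero_add]
            exact hw1 this
          · have h1 : mv = 1 := by omega
            have h2 : mw = 0 := by omega
            rw [hw0 h2, add_zero]
            exact hv1 h1 }
  have hsub : T ⊆ S := by
    intro t ht
    exact ⟨1, by rw [hT t ht]; norm_num, by norm_num, fun _ => ht⟩
  obtain ⟨m, hm, _, hm1⟩ := (AddSubmonoid.closure_le.mpr hsub) hmem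
  have hmq : (m : ℚ) = 1 := by rw [← hm, hx]
  exact hxT (hm1 (by exact_mod_cast hmq))

lemma Tset_not_saturated : ¬ IsSaturated Tset := by
  intro hsat
  have ht3t4 : (![0,1,1,0] : V 4) ≠ ![0,-1,1,0] := by
    intro h
    have := congrFun h 1
    norm_num at this
  have hspan : (![0,0,1,0] : V 4) ∈ Submodule.span ℤ Tset := by
    have hx : (![0,0,1,0] : V 4) = ![1,0,0,0] - ![1,1,0,0] + ![0,1,1,0] := by
      funext i; fin_cases i <;> norm_num
    rw [hx]
    refine add_mem (sub_mem ?_ ?_) ?_ <;> apply Submodule.subset_span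
    · exact Set.mem_insert _ _
    · exact Set.mem_insert_of_mem _ (Set.mem_insert _ _)
    · exact Set.mem_insert_of_mem _ (Set.mem_insert_of_mem _ (Set.mem_insert _ _))
  have hcone : InCone Tset ![0,0,1,0] := by
    refine ⟨{![0,1,1,0], ![0,-1,1,0]}, fun _ => 1/2, ?_, fun _ _ => by norm_num, ?_⟩
    · intro y hy
      simp only [Finset.coe_insert, Finset.coe_singleton, Set.mem_insert_iff,
        Set.mem_singleton_iff] at hy
      rcases hy with rfl | rfl
      · exact Set.mem_insert_of_mem _ (Set.mem_insert_of_mem _ (Set.mem_insert _ _))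
      · exact Set.mem_insert_of_mem _ (Set.mem_insert_of_mem _
          (Set.mem_insert_of_mem _ rfl))
    · rw [Finset.sum_pair ht3t4]
      funext i; fin_cases i <;> norm_num
  have hdot : ∀ t ∈ Tset, dot ![1,0,1,0] t = 1 := by
    intro t ht
    rcases ht with rfl | rfl | rfl | rfl <;> norm_num [dot, Fin.sum_univ_four, Matrix.cons_val_two, Matrix.cons_val_three]
  have hxdot : dot ![1,0,1,0] (![0,0,1,0] : V 4) = 1 := by
    norm_num [dot, Fin.sum_univ_four, Matrix.cons_val_two, Matrix.cons_val_three]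
  have hxT : (![0,0,1,0] : V 4) ∉ Tset := by
    intro hmem
    rcases hmem with h | h | h | h
    · have := congrFun h 0; norm_num at this
    · have := congrFun h 0; norm_num at this
    · have := congrFun h 1; norm_num at this
    · have := congrFun h 1; norm_num at this
  exact key_exclusion hdot hxdot hxT (hsat _ hspan hcone)

end Aux

/-- For every dominant weight `λ = a₁π₁ + a₂π₂ + a₃π₃ + a₄π₄` of `F₄` with
`λ ∉ {0, π₁}`, the set `M_{F₄}(λ)` contains a non-saturated subset; in particular it is
not hereditarily normal. -/
theorem f4_not_hereditarily_normal (a1 a2 a3 a4 : ℕ) (l : V 4)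
    (hl : l = (a1 : ℚ) • piF4_1 + (a2 : ℚ) • piF4_2 + (a3 : ℚ) • piF4_3 +
      (a4 : ℚ) • piF4_4)
    (h0 : l ≠ 0) (h1 : l ≠ piF4_1) :
    (∃ T ⊆ Mset f4roots l, ¬ IsSaturated T) ∧ ¬ HereditarilyNormal (Mset f4roots l) := by
  have hl4 : l = ![(a1:ℚ) + 3/2*(a2:ℚ) + 2*(a3:ℚ) + (a4:ℚ), (a2:ℚ)/2 + (a3:ℚ) + (a4:ℚ),
      (a2:ℚ)/2 + (a3:ℚ), (a2:ℚ)/2] := by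
    rw [hl]
    funext i
    fin_cases i <;> norm_num [piF4_1, piF4_2, piF4_3, piF4_4] <;> ring
  have key : 2 ≤ a1 ∨ 1 ≤ a2 + a3 + a4 := by
    by_contra hc
    push_neg at hc
    obtain ⟨ha1, hsum⟩ := hc
    have ha2 : a2 = 0 := by omega
    have ha3 : a3 = 0 := by omega
    have ha4 : a4 = 0 := by omega
    interval_cases a1
    · apply h0
      rw [hl4, ha2, ha3, ha4]
      funext i
      fin_cases i <;> norm_num
    · apply h1
      rw [hl4, ha2, ha3, ha4]
      funext i
      fin_cases i <;> norm_num [piF4_1]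
  have hA1 : (0:ℚ) ≤ (a1:ℚ) := Nat.cast_nonneg _
  have hA2 : (0:ℚ) ≤ (a2:ℚ) := Nat.cast_nonneg _
  have hA3 : (0:ℚ) ≤ (a3:ℚ) := Nat.cast_nonneg _
  have hA4 : (0:ℚ) ≤ (a4:ℚ) := Nat.cast_nonneg _
  have hpq : 2 ≤ ((a1:ℚ) + 3/2*(a2:ℚ) + 2*(a3:ℚ) + (a4:ℚ)) + ((a2:ℚ)/2 + (a3:ℚ) + (a4:ℚ)) := by
    rcases key with hk | hk
    · have : (2:ℚ) ≤ (a1:ℚ) := by exact_mod_cast hk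
      linarith
    · have : (1:ℚ) ≤ (a2:ℚ) + (a3:ℚ) + (a4:ℚ) := by exact_mod_cast hk
      linarith
  have hp : 1 ≤ (a1:ℚ) + 3/2*(a2:ℚ) + 2*(a3:ℚ) + (a4:ℚ) := by linarith
  obtain ⟨H1, H2, H3, H4⟩ := hulls _ _ ((a2:ℚ)/2 + (a3:ℚ)) ((a2:ℚ)/2) hp hpq
    (orbit_self f4roots _)
  rw [← hl4] at H1 H2 H3 H4
  have hlspan := l_mem_span a1 a2 a3 a4 l hl
  have hTsub : Tset ⊆ Mset f4roots l := by
    intro t ht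
    have htspan : t ∈ Submodule.span ℤ f4roots := by
      rcases ht with rfl | rfl | rfl | rfl
      exacts [Submodule.subset_span E0_root, Submodule.subset_span t2_root,
        Submodule.subset_span t3_root, Submodule.subset_span t4_root]
    refine ⟨sub_mem htspan hlspan, ?_⟩
    rcases ht with rfl | rfl | rfl | rfl
    exacts [H1, H2, H3, H4]
  refine ⟨⟨Tset, hTsub, Tset_not_saturated⟩, fun hHN => Tset_not_saturated (hHN Tset hTsub)⟩


end TorusNormal
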